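/- For n ≥ 2 and complex variables with |z| ≤ 1, |ξ| < 1, |η| < 1, the function (1 - ξz - η z̄ + ξη)^{1-n} admits a power series expansion ∑_{p,q≥0} R^n_{p,q}(z) ξ^p η^q, and the coefficients satisfy p! q! R^n_{p,q}(0) = (-1)^p δ_{pq} p! (n-1)n(n+1)⋯(n+p-2). -/

import Mathlib

/-!
Write `1 - ξz - ηz̄ + ξη = (1 - ξz)(1 - ηφ(ξ))` with `φ(ξ) = (z̄ - ξ)/(1 - ξz)`; when `|z| ≤ 1`,
`|φ| ≤ 1` on the unit disc. With `k = n - 2`, the negative binomial series in `η` shows that the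
coefficient of `η^q` in `(1 - ξz - ηz̄ + ξη)^(-(k+1))` is `C(q+k, k) φ(ξ)^q (1 - ξz)^(-(k+1))`,
a holomorphic function of `ξ` on the unit disc, and `R_{p,q}(z)` is its `p`-th Taylor coefficient.
Cauchy's estimate on the circle `|ξ| = s` gives `|R_{p,q}(z)| s^p ≤ C(q+k, k) (1 - s)^(-(k+1))`,
so the double series converges absolutely and may be summed first over `p`, then over `q`.
At `z = 0` the coefficient of `η^q` is the monomial `C(q+k, k) (-ξ)^q`.
-/

open Finset Complex ComplexConjugate Metric

namespace Complex

lemma norm_conj_sub_le_norm_one_sub_mul {z ξ : ℂ} (hz : ‖z‖ ≤ 1) (hξ : ‖ξ‖ ≤ 1) :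
    ‖conj z - ξ‖ ≤ ‖1 - ξ * z‖ := by
  have key : normSq (conj z - ξ) + (1 - normSq ξ) * (1 - normSq z) = normSq (1 - ξ * z) := by
    simp only [normSq_apply, sub_re, sub_im, mul_re, mul_im, one_re, one_im, conj_re, conj_im]
    ring
  have hz' : normSq z ≤ 1 := by rw [← Complex.sq_norm]; exact pow_le_one₀ (norm_nonneg z) hz
  have hξ' : normSq ξ ≤ 1 := by rw [← Complex.sq_norm]; exact pow_le_one₀ (norm_nonneg ξ) hξ
  rw [← sq_le_sq₀ (norm_nonneg _) (norm_nonneg _), Complex.sq_norm, Complex.sq_norm, ← key]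
  nlinarith [mul_nonneg (sub_nonneg.2 hξ') (sub_nonneg.2 hz')]

lemma one_sub_norm_le_norm_one_sub_mul {z : ℂ} (hz : ‖z‖ ≤ 1) (ξ : ℂ) :
    1 - ‖ξ‖ ≤ ‖1 - ξ * z‖ :=
  calc 1 - ‖ξ‖ ≤ ‖(1 : ℂ)‖ - ‖ξ * z‖ := by
        rw [norm_one, norm_mul]
        nlinarith [norm_nonneg ξ]
    _ ≤ ‖1 - ξ * z‖ := norm_sub_norm_le _ _

lemma one_sub_mul_ne_zero {z ξ : ℂ} (hz : ‖z‖ ≤ 1) (hξ : ‖ξ‖ < 1) : 1 - ξ * z ≠ 0 :=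
  norm_pos_iff.1 <| (sub_pos.2 hξ).trans_le (one_sub_norm_le_norm_one_sub_mul hz ξ)

end Complex

noncomputable def etaCoeff (k q : ℕ) (z ξ : ℂ) : ℂ :=
  (q + k).choose k * (conj z - ξ) ^ q / (1 - ξ * z) ^ (q + k + 1)

lemma hasSum_etaCoeff_mul_pow (k : ℕ) {z ξ η : ℂ} (hz : ‖z‖ ≤ 1) (hξ : ‖ξ‖ < 1) (hη : ‖η‖ < 1) :
    HasSum (fun q => etaCoeff k q z ξ * η ^ q)
      ((1 - ξ * z - η * conj z + ξ * η) ^ (k + 1))⁻¹ := by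
  have hA := one_sub_mul_ne_zero hz hξ
  set w := η * (conj z - ξ) / (1 - ξ * z)
  have hw : ‖w‖ < 1 := by
    rw [norm_div, norm_mul, div_lt_one (norm_pos_iff.2 hA)]
    calc ‖η‖ * ‖conj z - ξ‖ ≤ ‖η‖ * ‖1 - ξ * z‖ := by
          gcongr; exact norm_conj_sub_le_norm_one_sub_mul hz hξ.le
      _ < ‖1 - ξ * z‖ := mul_lt_of_lt_one_left (norm_pos_iff.2 hA) hη
  have hfactor : 1 - ξ * z - η * conj z + ξ * η = (1 - ξ * z) * (1 - w) := by
    simp only [w]; field_simp; ring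
  have h := (hasSum_choose_mul_geometric_of_norm_lt_one k hw).mul_left ((1 - ξ * z) ^ (k + 1))⁻¹
  rw [one_div, ← mul_inv, ← mul_pow, ← hfactor] at h
  refine h.congr_fun fun q => ?_
  simp only [etaCoeff, w, div_pow, mul_pow]
  field_simp
  ring

lemma norm_etaCoeff_le (k q : ℕ) {z ξ : ℂ} (hz : ‖z‖ ≤ 1) (hξ : ‖ξ‖ < 1) :
    ‖etaCoeff k q z ξ‖ ≤ (q + k).choose k / (1 - ‖ξ‖) ^ (k + 1) := by
  have hA : ‖1 - ξ * z‖ ≠ 0 := norm_ne_zero_iff.2 (one_sub_mul_ne_zero hz hξ)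
  calc ‖etaCoeff k q z ξ‖
      = (q + k).choose k * ‖conj z - ξ‖ ^ q / ‖1 - ξ * z‖ ^ (q + k + 1) := by
        simp [etaCoeff, norm_pow]
    _ ≤ (q + k).choose k * ‖1 - ξ * z‖ ^ q / ‖1 - ξ * z‖ ^ (q + k + 1) := by
        gcongr; exact norm_conj_sub_le_norm_one_sub_mul hz hξ.le
    _ = (q + k).choose k / ‖1 - ξ * z‖ ^ (k + 1) := by
        rw [show q + k + 1 = q + (k + 1) by ring, pow_add]
        field_simp
    _ ≤ (q + k).choose k / (1 - ‖ξ‖) ^ (k + 1) := by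
        gcongr
        exact one_sub_norm_le_norm_one_sub_mul hz ξ

lemma differentiableOn_etaCoeff (k q : ℕ) {z : ℂ} (hz : ‖z‖ ≤ 1) :
    DifferentiableOn ℂ (etaCoeff k q z) (ball 0 1) := by
  intro ξ hξ
  rw [mem_ball_zero_iff] at hξ
  have := one_sub_mul_ne_zero hz hξ
  unfold etaCoeff
  fun_prop (disch := exact pow_ne_zero _ this)

/-- With `k = n - 2` this is `R^n_{p,q}`. -/
noncomputable def diskCoeff (k p q : ℕ) (z : ℂ) : ℂ :=
  iteratedDeriv p (etaCoeff k q z) 0 / p.factorial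

lemma hasSum_diskCoeff_mul_pow (k q : ℕ) {z ξ : ℂ} (hz : ‖z‖ ≤ 1) (hξ : ‖ξ‖ < 1) :
    HasSum (fun p => diskCoeff k p q z * ξ ^ p) (etaCoeff k q z ξ) := by
  refine (Complex.hasSum_taylorSeries_on_ball (differentiableOn_etaCoeff k q hz)
    (mem_ball_zero_iff.2 hξ)).congr_fun fun p => ?_
  simp only [diskCoeff, sub_zero, smul_eq_mul]
  ring

lemma norm_diskCoeff_mul_pow_le (k p q : ℕ) {z : ℂ} (hz : ‖z‖ ≤ 1) {s : ℝ} (hs : 0 < s)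
    (hs1 : s < 1) :
    ‖diskCoeff k p q z‖ * s ^ p ≤ (q + k).choose k / (1 - s) ^ (k + 1) := by
  have hcauchy := Complex.norm_iteratedDeriv_le_of_forall_mem_sphere_norm_le p hs
    ((differentiableOn_etaCoeff k q hz).diffContOnCl_ball (closedBall_subset_ball hs1))
    fun ξ hξ => by
      rw [mem_sphere_zero_iff_norm] at hξ
      simpa [hξ] using norm_etaCoeff_le k q hz (hξ.trans_lt hs1)
  calc ‖diskCoeff k p q z‖ * s ^ p
        = ‖iteratedDeriv p (etaCoeff k q z) 0‖ * s ^ p / p.factorial := by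
        rw [diskCoeff, norm_div, Complex.norm_natCast]; ring
    _ ≤ p.factorial * ((q + k).choose k / (1 - s) ^ (k + 1)) / s ^ p * s ^ p / p.factorial := by
        gcongr
    _ = (q + k).choose k / (1 - s) ^ (k + 1) := by
        field_simp

lemma summable_norm_diskCoeff_mul_pow_mul_pow (k : ℕ) {z ξ η : ℂ} (hz : ‖z‖ ≤ 1) (hξ : ‖ξ‖ < 1)
    (hη : ‖η‖ < 1) :
    Summable fun pq : ℕ × ℕ => ‖diskCoeff k pq.1 pq.2 z * ξ ^ pq.1 * η ^ pq.2‖ := by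
  obtain ⟨s, hξs, hs1⟩ := exists_between hξ
  have hs : 0 < s := (norm_nonneg ξ).trans_lt hξs
  have hgeom : Summable fun p : ℕ => (‖ξ‖ / s) ^ p :=
    summable_geometric_of_lt_one (by positivity) ((div_lt_one hs).2 hξs)
  have hbinom : Summable fun q : ℕ => (q + k).choose k / (1 - s) ^ (k + 1) * ‖η‖ ^ q := by
    have hη' : ‖‖η‖‖ < 1 := by rwa [norm_norm]
    exact ((summable_choose_mul_geometric_of_norm_lt_one k hη').mul_right
      ((1 - s) ^ (k + 1))⁻¹).congr fun q => by ring
  refine Summable.of_nonneg_of_le (fun _ => norm_nonneg _) (fun ⟨p, q⟩ => ?_)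
    (hgeom.mul_of_nonneg hbinom (fun _ => by positivity) fun _ => ?_)
  · calc ‖diskCoeff k p q z * ξ ^ p * η ^ q‖
        = ‖diskCoeff k p q z‖ * s ^ p * (‖ξ‖ / s) ^ p * ‖η‖ ^ q := by
          rw [norm_mul, norm_mul, norm_pow, norm_pow, div_pow]; field_simp
      _ ≤ (q + k).choose k / (1 - s) ^ (k + 1) * (‖ξ‖ / s) ^ p * ‖η‖ ^ q := by
          gcongr; exact norm_diskCoeff_mul_pow_le k p q hz hs hs1
      _ = (‖ξ‖ / s) ^ p * ((q + k).choose k / (1 - s) ^ (k + 1) * ‖η‖ ^ q) := by ring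
  · have : 0 < 1 - s := sub_pos.2 hs1
    positivity

lemma hasSum_diskCoeff (k : ℕ) {z ξ η : ℂ} (hz : ‖z‖ ≤ 1) (hξ : ‖ξ‖ < 1) (hη : ‖η‖ < 1) :
    HasSum (fun pq : ℕ × ℕ => diskCoeff k pq.1 pq.2 z * ξ ^ pq.1 * η ^ pq.2)
      ((1 - ξ * z - η * conj z + ξ * η) ^ (k + 1))⁻¹ := by
  have h := (summable_norm_diskCoeff_mul_pow_mul_pow k hz hξ hη).of_norm.hasSum
  have hfiber := ((Equiv.prodComm ℕ ℕ).hasSum_iff.2 h).prod_fiberwise fun q =>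
    (hasSum_diskCoeff_mul_pow k q hz hξ).mul_right (η ^ q)
  rwa [hfiber.unique (hasSum_etaCoeff_mul_pow k hz hξ hη)] at h

lemma diskCoeff_zero (k p q : ℕ) :
    diskCoeff k p q 0 = if p = q then (-1 : ℂ) ^ p * (p + k).choose k else 0 := by
  have : etaCoeff k q 0 = fun ξ => (-1 : ℂ) ^ q * (q + k).choose k * ξ ^ q := by
    funext ξ
    simp only [etaCoeff, map_zero, zero_sub, mul_zero, sub_zero, one_pow, div_one]
    ring
  rw [diskCoeff, this, iteratedDeriv_const_mul_field, iteratedDeriv_fun_pow_zero]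
  split_ifs with h
  · subst h
    have : (p.factorial : ℂ) ≠ 0 := Nat.cast_ne_zero.2 p.factorial_ne_zero
    field_simp
  · simp

theorem stmt17 (n : ℕ) (hn : 2 ≤ n) :
    ∃ R : ℕ → ℕ → ℂ → ℂ,
      (∀ z ξ η : ℂ, ‖z‖ ≤ 1 → ‖ξ‖ < 1 → ‖η‖ < 1 →
        HasSum (fun pq : ℕ × ℕ => R pq.1 pq.2 z * ξ ^ pq.1 * η ^ pq.2)
          ((1 - ξ * z - η * (starRingEnd ℂ) z + ξ * η) ^ ((1 : ℤ) - n)))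
      ∧ ∀ p q : ℕ,
          (p.factorial : ℂ) * q.factorial * R p q 0
            = (-1 : ℂ) ^ p * (if p = q then 1 else 0) * p.factorial *
                ∏ j ∈ range p, ((n : ℂ) - 1 + j) := by
  obtain ⟨k, rfl⟩ := Nat.exists_eq_add_of_le' hn
  refine ⟨diskCoeff k, fun z ξ η hz hξ hη => ?_, fun p q => ?_⟩
  · have hexp : (1 : ℤ) - (k + 2 : ℕ) = -(k + 1 : ℕ) := by push_cast; ring
    rw [hexp, zpow_neg, zpow_natCast]
    exact hasSum_diskCoeff k hz hξ hη
  rw [diskCoeff_zero]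
  split_ifs with hpq
  · subst hpq
    have hprod : ∏ j ∈ range p, (((k + 2 : ℕ) : ℂ) - 1 + j) = ((k + 1).ascFactorial p : ℂ) := by
      rw [Nat.ascFactorial_eq_prod_range]
      push_cast
      exact prod_congr rfl fun j _ => by ring
    rw [hprod, Nat.ascFactorial_eq_factorial_mul_choose, add_comm k p, Nat.choose_symm_add]
    push_cast
    ring
  · simp
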